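/- arXiv:2412.17193 — 2 statements merged into one kernel-verified Lean document; each statement's English description precedes it below -/
import Mathlib

section
/- Let ω be a positive integer and let x₁,…,xₙ be a finite sequence of closed intervals in ℝ whose lengths take at most two distinct values and whose clique number is at most ω. Then the First-Fit coloring of this sequence uses at most 4ω − 3 colors, i.e., c(i) ≤ 4ω − 3 for every i. -/
/-- Auxiliary definition of the First-Fit coloring of a sequence of closed
intervals: `firstFitAux x k` is the coloring of the first `k` intervals
(and `0` on the rest). Interval `i` gets the least positive integer not used
on an earlier interval intersecting it. -/
noncomputable def firstFitAux {n : ℕ} (x : Fin n → ℝ × ℝ) : ℕ → Fin n → ℕ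
  | 0 => fun _ => 0
  | k + 1 => fun i =>
      if i.1 = k then
        sInf {c : ℕ | 1 ≤ c ∧ ∀ j : Fin n, j < i →
          (Set.Icc (x j).1 (x j).2 ∩ Set.Icc (x i).1 (x i).2).Nonempty →
          firstFitAux x k j ≠ c}
      else firstFitAux x k i

/-- The First-Fit coloring of a finite sequence of closed intervals. -/
noncomputable def firstFit {n : ℕ} (x : Fin n → ℝ × ℝ) (i : Fin n) : ℕ :=
  firstFitAux x (i.1 + 1) i

lemma ffAux_stable {n : ℕ} (x : Fin n → ℝ × ℝ) :
    ∀ (k : ℕ) (i : Fin n), i.1 < k → firstFitAux x k i = firstFit x i := by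
  intro k
  induction k with
  | zero => intro i h; omega
  | succ k ih =>
    intro i h
    by_cases hik : i.1 = k
    · subst hik
      rfl
    · have h2 : i.1 < k := by omega
      have h3 : firstFitAux x (k+1) i = firstFitAux x k i := by
        simp only [firstFitAux, if_neg hik]
      rw [h3]; exact ih i h2

lemma ff_eq_sInf {n : ℕ} (x : Fin n → ℝ × ℝ) (i : Fin n) :
    firstFit x i = sInf {c : ℕ | 1 ≤ c ∧ ∀ j : Fin n, j < i →
      (Set.Icc (x j).1 (x j).2 ∩ Set.Icc (x i).1 (x i).2).Nonempty →
      firstFit x j ≠ c} := by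
  have hrw : ∀ j : Fin n, j < i → firstFitAux x i.1 j = firstFit x j :=
    fun j hj => ffAux_stable x i.1 j hj
  show firstFitAux x (i.1 + 1) i = _
  simp only [firstFitAux, if_pos rfl]
  refine congrArg sInf ?_
  ext cc
  simp only [Set.mem_setOf_eq]
  constructor
  · rintro ⟨h1, h2⟩
    exact ⟨h1, fun j hj hne => by rw [← hrw j hj]; exact h2 j hj hne⟩
  · rintro ⟨h1, h2⟩
    exact ⟨h1, fun j hj hne => by rw [hrw j hj]; exact h2 j hj hne⟩

lemma ff_set_nonempty {n : ℕ} (x : Fin n → ℝ × ℝ) (i : Fin n) :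
    {c : ℕ | 1 ≤ c ∧ ∀ j : Fin n, j < i →
      (Set.Icc (x j).1 (x j).2 ∩ Set.Icc (x i).1 (x i).2).Nonempty →
      firstFit x j ≠ c}.Nonempty := by
  refine ⟨Finset.univ.sup (firstFit x) + 1, ?_, ?_⟩
  · omega
  · intro j hj hne
    have := Finset.le_sup (f := firstFit x) (Finset.mem_univ j)
    omega

lemma ff_pos {n : ℕ} (x : Fin n → ℝ × ℝ) (i : Fin n) : 1 ≤ firstFit x i := by
  rw [ff_eq_sInf]
  exact (Nat.sInf_mem (ff_set_nonempty x i)).1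

lemma ff_exists {n : ℕ} (x : Fin n → ℝ × ℝ) (i : Fin n) (c' : ℕ)
    (h1 : 1 ≤ c') (h2 : c' < firstFit x i) :
    ∃ j : Fin n, j < i ∧
      (Set.Icc (x j).1 (x j).2 ∩ Set.Icc (x i).1 (x i).2).Nonempty ∧
      firstFit x j = c' := by
  rw [ff_eq_sInf] at h2
  have h3 := Nat.notMem_of_lt_sInf h2
  simp only [Set.mem_setOf_eq, not_and] at h3
  have h4 := h3 h1
  push_neg at h4
  exact h4

lemma geom {a b p q t : ℝ} (h1 : q - p ≥ b - a)
    (ht1 : t ∈ Set.Icc p q) (ht2 : t ∈ Set.Icc a b) :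
    a ∈ Set.Icc p q ∨ b ∈ Set.Icc p q := by
  simp only [Set.mem_Icc] at *
  by_contra h
  push_neg at h
  obtain ⟨h3, h4⟩ := h
  rcases le_or_gt p a with h5 | h5
  · have := h3 h5; linarith [ht1.1, ht1.2, ht2.1, ht2.2]
  · rcases le_or_gt p b with h6 | h6
    · have := h4 h6; linarith [ht1.1, ht1.2, ht2.1, ht2.2]
    · linarith [ht1.1, ht1.2, ht2.1, ht2.2]

lemma countlem {α : Type*} [DecidableEq α] (A B D E : Finset α)
    (hD : D ⊆ A ∪ B) (hE : E ⊆ A ∩ B) (hDE : Disjoint D E) :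
    D.card + 2 * E.card ≤ A.card + B.card := by
  have hDE2 : D ∪ E ⊆ A ∪ B :=
    Finset.union_subset hD (hE.trans (Finset.inter_subset_union))
  have h1 : (D ∪ E).card ≤ (A ∪ B).card := Finset.card_le_card hDE2
  have h2 : E.card ≤ (A ∩ B).card := Finset.card_le_card hE
  have h3 := Finset.card_union_add_card_inter A B
  have h4 := Finset.card_union_of_disjoint hDE
  omega

theorem stmt7 (ω : ℕ) (hω : 1 ≤ ω) (n : ℕ) (x : Fin n → ℝ × ℝ)
    (hvalid : ∀ i, (x i).1 ≤ (x i).2)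
    (htwo : ∃ L₁ L₂ : ℝ, ∀ i, (x i).2 - (x i).1 = L₁ ∨ (x i).2 - (x i).1 = L₂)
    (hclique : ∀ t : ℝ, {i : Fin n | t ∈ Set.Icc (x i).1 (x i).2}.ncard ≤ ω) :
    ∀ i, firstFit x i ≤ 4 * ω - 3 := by
  classical
  obtain ⟨L₁, L₂, hL⟩ := htwo
  set m := min L₁ L₂ with hm'
  set M := max L₁ L₂ with hM'
  have hmM : m ≤ M := min_le_max
  have hlen : ∀ i, (x i).2 - (x i).1 = m ∨ (x i).2 - (x i).1 = M := by
    intro i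
    rcases hL i with h | h <;> rw [h]
    · rcases le_total L₁ L₂ with hh | hh
      · left; exact (min_eq_left hh).symm
      · right; exact (max_eq_left hh).symm
    · rcases le_total L₁ L₂ with hh | hh
      · right; exact (max_eq_right hh).symm
      · left; exact (min_eq_right hh).symm
  have hshort : ∀ i, m ≤ (x i).2 - (x i).1 := by
    intro i; rcases hlen i with h | h <;> rw [h]
    exact hmM
  have hcard : ∀ t : ℝ,
      (Finset.univ.filter (fun j : Fin n => t ∈ Set.Icc (x j).1 (x j).2)).card ≤ ω := by
    intro t
    have h1 := hclique t
    have h2 : {i : Fin n | t ∈ Set.Icc (x i).1 (x i).2}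
        = ↑(Finset.univ.filter (fun j : Fin n => t ∈ Set.Icc (x j).1 (x j).2)) := by
      ext k; simp
    rwa [h2, Set.ncard_coe_finset] at h1
  -- key lemma: intervals of minimal length, with a set E of "extra" intervals
  -- containing both endpoints and having larger colors
  have key : ∀ (j : Fin n) (E : Finset (Fin n)),
      (x j).2 - (x j).1 = m →
      (∀ e ∈ E, (x j).1 ∈ Set.Icc (x e).1 (x e).2 ∧ (x j).2 ∈ Set.Icc (x e).1 (x e).2) →
      (∀ e ∈ E, firstFit x j < firstFit x e) →
      firstFit x j + 2 * E.card + 1 ≤ 2 * ω := by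
    intro j E hjm hEcont hEcol
    have hcj1 : 1 ≤ firstFit x j := ff_pos x j
    have hch : ∀ c' : ℕ, ∃ k : Fin n, (1 ≤ c' ∧ c' < firstFit x j) →
        (k < j ∧ (Set.Icc (x k).1 (x k).2 ∩ Set.Icc (x j).1 (x j).2).Nonempty ∧
          firstFit x k = c') := by
      intro c'
      by_cases h : 1 ≤ c' ∧ c' < firstFit x j
      · obtain ⟨k, hk⟩ := ff_exists x j c' h.1 h.2
        exact ⟨k, fun _ => hk⟩
      · exact ⟨j, fun hh => absurd hh h⟩
    choose g hg using hch
    set cj := firstFit x j with hcj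
    set D := (Finset.Icc 1 (cj - 1)).image g with hD
    have hmemc : ∀ c' ∈ Finset.Icc 1 (cj - 1), 1 ≤ c' ∧ c' < cj := by
      intro c' hc'; simp only [Finset.mem_Icc] at hc'; omega
    have hgcol : ∀ c' ∈ Finset.Icc 1 (cj - 1), firstFit x (g c') = c' :=
      fun c' hc' => (hg c' (hmemc c' hc')).2.2
    have hDcard : D.card = cj - 1 := by
      rw [hD, Finset.card_image_of_injOn, Nat.card_Icc]
      · omega
      · intro a ha b hb hab
        rw [← hgcol a ha, ← hgcol b hb, hab]
    set A := Finset.univ.filter (fun k : Fin n => (x j).1 ∈ Set.Icc (x k).1 (x k).2) with hA'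
    set B := Finset.univ.filter (fun k : Fin n => (x j).2 ∈ Set.Icc (x k).1 (x k).2) with hB'
    have hDsub : D ⊆ A ∪ B := by
      intro d hd
      rw [hD] at hd
      obtain ⟨c', hc', rfl⟩ := Finset.mem_image.mp hd
      obtain ⟨hlt, ⟨t, ht1, ht2⟩, hcol⟩ := hg c' (hmemc c' hc')
      have hgeom := geom (a := (x j).1) (b := (x j).2) (p := (x (g c')).1)
        (q := (x (g c')).2) (by rw [hjm]; exact hshort _) ht1 ht2
      rcases hgeom with h | h
      · exact Finset.mem_union_left _ (by rw [hA', Finset.mem_filter]; exact ⟨Finset.mem_univ _, h⟩)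
      · exact Finset.mem_union_right _ (by rw [hB', Finset.mem_filter]; exact ⟨Finset.mem_univ _, h⟩)
    set E' := insert j E with hE'
    have hjE : j ∉ E := fun h => lt_irrefl _ (hEcol j h)
    have hE'sub : E' ⊆ A ∩ B := by
      intro e he
      rw [hE', Finset.mem_insert] at he
      rw [Finset.mem_inter, hA', hB', Finset.mem_filter, Finset.mem_filter]
      rcases he with rfl | he
      · exact ⟨⟨Finset.mem_univ _, Set.mem_Icc.mpr ⟨le_refl _, hvalid e⟩⟩,
          ⟨Finset.mem_univ _, Set.mem_Icc.mpr ⟨hvalid e, le_refl _⟩⟩⟩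
      · obtain ⟨h1, h2⟩ := hEcont e he
        exact ⟨⟨Finset.mem_univ _, h1⟩, ⟨Finset.mem_univ _, h2⟩⟩
    have hdisj : Disjoint D E' := by
      rw [Finset.disjoint_left]
      intro d hd hd2
      rw [hD] at hd
      obtain ⟨c', hc', rfl⟩ := Finset.mem_image.mp hd
      have hcol := hgcol c' hc'
      simp only [Finset.mem_Icc] at hc'
      rw [hE', Finset.mem_insert] at hd2
      rcases hd2 with h | h
      · rw [h] at hcol; omega
      · have := hEcol _ h; omega
    have hcount := countlem A B D E' hDsub hE'sub hdisj
    have hcA : A.card ≤ ω := hcard _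
    have hcB : B.card ≤ ω := hcard _
    have hE'card : E'.card = E.card + 1 := Finset.card_insert_of_notMem hjE
    omega
  intro i
  have hc1 : 1 ≤ firstFit x i := ff_pos x i
  by_cases him : (x i).2 - (x i).1 = m
  · have hk := key i ∅ him (by simp) (by simp)
    simp only [Finset.card_empty] at hk
    omega
  · have hi : (x i).2 - (x i).1 = M := (hlen i).resolve_left him
    set c := firstFit x i with hc
    have hch : ∀ c' : ℕ, ∃ k : Fin n, (1 ≤ c' ∧ c' < c) →
        (k < i ∧ (Set.Icc (x k).1 (x k).2 ∩ Set.Icc (x i).1 (x i).2).Nonempty ∧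
          firstFit x k = c') := by
      intro c'
      by_cases h : 1 ≤ c' ∧ c' < c
      · obtain ⟨k, hk⟩ := ff_exists x i c' h.1 h.2
        exact ⟨k, fun _ => hk⟩
      · exact ⟨i, fun hh => absurd hh h⟩
    choose g hg using hch
    set T := Finset.Icc 1 (c - 1) with hT
    have hmemc : ∀ c' ∈ T, 1 ≤ c' ∧ c' < c := by
      intro c' hc'; rw [hT, Finset.mem_Icc] at hc'; omega
    have hgcol : ∀ c' ∈ T, firstFit x (g c') = c' :=
      fun c' hc' => (hg c' (hmemc c' hc')).2.2
    have hginj : Set.InjOn g T := by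
      intro a ha b hb hab
      rw [← hgcol a ha, ← hgcol b hb, hab]
    set Da := T.filter (fun c' => (x i).1 ∈ Set.Icc (x (g c')).1 (x (g c')).2) with hDa
    set Db := T.filter (fun c' => (x i).2 ∈ Set.Icc (x (g c')).1 (x (g c')).2) with hDb
    set Din := T.filter (fun c' => (x i).1 ∉ Set.Icc (x (g c')).1 (x (g c')).2 ∧
      (x i).2 ∉ Set.Icc (x (g c')).1 (x (g c')).2) with hDin
    have hTsub : T ⊆ Da ∪ Db ∪ Din := by
      intro c' hc'
      by_cases h1 : (x i).1 ∈ Set.Icc (x (g c')).1 (x (g c')).2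
      · exact Finset.mem_union_left _ (Finset.mem_union_left _
          (Finset.mem_filter.mpr ⟨hc', h1⟩))
      by_cases h2 : (x i).2 ∈ Set.Icc (x (g c')).1 (x (g c')).2
      · exact Finset.mem_union_left _ (Finset.mem_union_right _
          (Finset.mem_filter.mpr ⟨hc', h2⟩))
      · exact Finset.mem_union_right _ (Finset.mem_filter.mpr ⟨hc', h1, h2⟩)
    have hTcard : T.card ≤ Da.card + Db.card + Din.card := by
      calc T.card ≤ (Da ∪ Db ∪ Din).card := Finset.card_le_card hTsub
        _ ≤ (Da ∪ Db).card + Din.card := Finset.card_union_le _ _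
        _ ≤ Da.card + Db.card + Din.card := by
            have := Finset.card_union_le Da Db; omega
    -- endpoint bounds
    have hendpt : ∀ (t : ℝ) (S : Finset ℕ), S ⊆ T →
        t ∈ Set.Icc (x i).1 (x i).2 →
        (∀ c' ∈ S, t ∈ Set.Icc (x (g c')).1 (x (g c')).2) →
        S.card + 1 ≤ ω := by
      intro t S hST ht hSmem
      have hsub : insert i (S.image g) ⊆
          Finset.univ.filter (fun k : Fin n => t ∈ Set.Icc (x k).1 (x k).2) := by
        intro d hd
        rcases Finset.mem_insert.mp hd with rfl | hd
        · exact Finset.mem_filter.mpr ⟨Finset.mem_univ _, ht⟩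
        · obtain ⟨c', hc', rfl⟩ := Finset.mem_image.mp hd
          exact Finset.mem_filter.mpr ⟨Finset.mem_univ _, hSmem c' hc'⟩
      have hinot : i ∉ S.image g := by
        intro hmem
        obtain ⟨c', hc', heq⟩ := Finset.mem_image.mp hmem
        have h1 := hgcol c' (hST hc')
        rw [heq] at h1
        have h2 := hmemc c' (hST hc')
        omega
      have hcard1 : (insert i (S.image g)).card = S.card + 1 := by
        rw [Finset.card_insert_of_notMem hinot,
          Finset.card_image_of_injOn (hginj.mono (by exact_mod_cast hST))]
      calc S.card + 1 = (insert i (S.image g)).card := hcard1.symm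
        _ ≤ _ := Finset.card_le_card hsub
        _ ≤ ω := hcard t
    have hDaB : Da.card + 1 ≤ ω := by
      refine hendpt (x i).1 Da (Finset.filter_subset _ _)
        (Set.mem_Icc.mpr ⟨le_refl _, hvalid i⟩) ?_
      intro c' hc'
      exact (Finset.mem_filter.mp hc').2
    have hDbB : Db.card + 1 ≤ ω := by
      refine hendpt (x i).2 Db (Finset.filter_subset _ _)
        (Set.mem_Icc.mpr ⟨hvalid i, le_refl _⟩) ?_
      intro c' hc'
      exact (Finset.mem_filter.mp hc').2
    have hDinB : Din.card ≤ 2 * ω - 3 := by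
      have hsub2 : Din ⊆ Finset.Icc 1 (2 * ω - 3) := by
        intro c' hc'
        obtain ⟨hcT, hna, hnb⟩ := Finset.mem_filter.mp hc'
        obtain ⟨hlt, ⟨t, ht1, ht2⟩, hcol⟩ := hg c' (hmemc c' hcT)
        -- strictly inside
        have hio : (x i).1 < (x (g c')).1 ∧ (x (g c')).2 < (x i).2 := by
          simp only [Set.mem_Icc, not_and, not_le] at hna hnb
          simp only [Set.mem_Icc] at ht1 ht2
          constructor
          · by_contra hcon
            push_neg at hcon
            have := hna hcon
            linarith [ht1.1, ht1.2, ht2.1, ht2.2]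
          · have hple : (x (g c')).1 ≤ (x i).2 := by
              linarith [ht1.1, ht1.2, ht2.1, ht2.2]
            exact hnb hple
        -- the inner interval is short
        have hglen : (x (g c')).2 - (x (g c')).1 = m := by
          rcases hlen (g c') with h | h
          · exact h
          · exfalso
            have hgeq : (x (g c')).2 - (x (g c')).1 ≥ (x i).2 - (x i).1 := by
              rw [h, hi]
            rcases geom hgeq ht1 ht2 with h' | h'
            · exact hna h'
            · exact hnb h'
        have hk := key (g c') {i} hglen ?_ ?_
        · rw [Finset.card_singleton, hcol] at hk
          rw [Finset.mem_Icc]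
          have := (hmemc c' hcT).1
          omega
        · intro e he
          rw [Finset.mem_singleton] at he
          subst he
          have hv := hvalid (g c')
          constructor <;> rw [Set.mem_Icc] <;>
            exact ⟨by linarith [hio.1, hio.2], by linarith [hio.1, hio.2]⟩
        · intro e he
          rw [Finset.mem_singleton] at he
          subst he
          rw [hcol]
          exact (hmemc c' hcT).2
      calc Din.card ≤ (Finset.Icc 1 (2 * ω - 3)).card := Finset.card_le_card hsub2
        _ = 2 * ω - 3 := by rw [Nat.card_Icc]; omega
    have hTc : T.card = c - 1 := by rw [hT, Nat.card_Icc]; omega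
    omega
end

section
/- Let ω be a positive integer and let F be a finite family of closed intervals in ℝ such that every point of ℝ belongs to at most ω members of F. If x ∈ F is an interval whose length is minimal among the lengths of intervals in F, then x intersects at most 2ω − 2 other members of F. -/
theorem stmt8 (ω : ℕ) (hω : 1 ≤ ω) (n : ℕ) (x : Fin n → ℝ × ℝ)
    (hvalid : ∀ i, (x i).1 ≤ (x i).2)
    (hcover : ∀ t : ℝ, {i : Fin n | t ∈ Set.Icc (x i).1 (x i).2}.ncard ≤ ω)
    (k : Fin n)
    (hmin : ∀ i, (x k).2 - (x k).1 ≤ (x i).2 - (x i).1) :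
    {i : Fin n | i ≠ k ∧
      (Set.Icc (x i).1 (x i).2 ∩ Set.Icc (x k).1 (x k).2).Nonempty}.ncard ≤ 2 * ω - 2 := by
  set a := (x k).1
  set b := (x k).2
  set A : Set (Fin n) := {i | a ∈ Set.Icc (x i).1 (x i).2} with hA
  set B : Set (Fin n) := {i | b ∈ Set.Icc (x i).1 (x i).2} with hB
  have hkA : k ∈ A := ⟨le_refl a, hvalid k⟩
  have hkB : k ∈ B := ⟨hvalid k, le_refl b⟩
  have hsub : {i : Fin n | i ≠ k ∧
      (Set.Icc (x i).1 (x i).2 ∩ Set.Icc (x k).1 (x k).2).Nonempty} ⊆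
      (A \ {k}) ∪ (B \ {k}) := by
    rintro i ⟨hik, t, ⟨h1, h2⟩, ⟨h3, h4⟩⟩
    by_cases hai : a ∈ Set.Icc (x i).1 (x i).2
    · exact Or.inl ⟨hai, hik⟩
    · refine Or.inr ⟨⟨le_trans h1 h4, ?_⟩, hik⟩
      have ha2 : a ≤ (x i).2 := le_trans h3 h2
      have : a < (x i).1 := by
        by_contra h
        exact hai ⟨le_of_not_gt h, ha2⟩
      have := hmin i
      linarith
  have hfin : ∀ s : Set (Fin n), s.Finite := fun s => Set.toFinite s
  have hcard : ∀ s : Set (Fin n), k ∈ s → (s \ {k}).ncard = s.ncard - 1 := by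
    intro s hk
    exact Set.ncard_diff_singleton_of_mem hk
  have h1 : (A \ {k}).ncard ≤ ω - 1 := by
    rw [hcard A hkA]
    exact Nat.sub_le_sub_right (hcover a) 1
  have h2 : (B \ {k}).ncard ≤ ω - 1 := by
    rw [hcard B hkB]
    exact Nat.sub_le_sub_right (hcover b) 1
  calc {i : Fin n | i ≠ k ∧
      (Set.Icc (x i).1 (x i).2 ∩ Set.Icc (x k).1 (x k).2).Nonempty}.ncard
      ≤ ((A \ {k}) ∪ (B \ {k})).ncard := Set.ncard_le_ncard hsub (hfin _)
    _ ≤ (A \ {k}).ncard + (B \ {k}).ncard := Set.ncard_union_le _ _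
    _ ≤ 2 * ω - 2 := by omega
end
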